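/- Under the model and Conditions A1–A7, with V = R^{-1}, all three families of matrices Ṽ_R = V(I−S_d), Ṽ_L = (I−S_d)ᵀV and Ṽ = (I−S_d)ᵀV(I−S_d) are AVUS, i.e., their absolute row sums and absolute column sums are bounded by a constant uniformly in n. -/

import Mathlib

open MeasureTheory ProbabilityTheory Filter Matrix

noncomputable section

/-- Design points `t_i = i/n`, `i = 1,…,n` (here `0`-indexed: `dpt n i = (i+1)/n`). -/
def dpt (n : ℕ) (i : Fin n) : ℝ := ((i : ℕ) + 1) / n

/-- The rescaled kernel `K_b(t) = K(t/b)/b`. -/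
def scaledKer (K : ℝ → ℝ) (b t : ℝ) : ℝ := K (t / b) / b

/-- The `2 × 2` matrix `X(t_i)ᵀ W(t_i) X(t_i)` of local linear regression. -/
def locMat (K : ℝ → ℝ) (b : ℝ) (n : ℕ) (i : Fin n) : Matrix (Fin 2) (Fin 2) ℝ :=
  Matrix.of fun a c =>
    ∑ j : Fin n, scaledKer K b (dpt n j - dpt n i) * (dpt n j - dpt n i) ^ ((a : ℕ) + (c : ℕ))

/-- The local linear smoothing matrix `S_d`:
`S_d(i,j) = (1,0){X(tᵢ)ᵀW(tᵢ)X(tᵢ)}⁻¹(1, tⱼ-tᵢ)ᵀ K_b(tⱼ-tᵢ)`. -/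
def smoothMat (K : ℝ → ℝ) (b : ℝ) (n : ℕ) : Matrix (Fin n) (Fin n) ℝ :=
  Matrix.of fun i j =>
    ((locMat K b n i)⁻¹ *ᵥ ![1, dpt n j - dpt n i]) 0 * scaledKer K b (dpt n j - dpt n i)

/-- `χ²_k`: the law of the sum of squares of `k` i.i.d. standard normal random variables. -/
def chiSq (k : ℕ) : Measure ℝ :=
  (Measure.pi fun _ : Fin k => gaussianReal 0 1).map fun x => ∑ i, x i ^ 2

/-- Convergence in distribution (weak convergence of laws) of real random variables. -/
def TendstoInDistribution {Ω : Type*} [MeasurableSpace Ω] (μ : Measure Ω)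
    (X : ℕ → Ω → ℝ) (ν : Measure ℝ) : Prop :=
  ∀ φ : BoundedContinuousFunction ℝ ℝ,
    Tendsto (fun n => ∫ ω, φ (X n ω) ∂μ) atTop (nhds (∫ x, φ x ∂ν))

/-- Convergence in probability to a constant. -/
def TendstoInProbability {Ω : Type*} [MeasurableSpace Ω] (μ : Measure Ω)
    (X : ℕ → Ω → ℝ) (c : ℝ) : Prop :=
  ∀ δ : ℝ, 0 < δ → Tendsto (fun n => μ {ω | δ ≤ |X n ω - c|}) atTop (nhds 0)

/-- The `ℓ∞` (maximum absolute row sum) norm of a matrix. -/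
def infNorm {n : ℕ} (B : Matrix (Fin n) (Fin n) ℝ) : ℝ := ⨆ i, ∑ j, |B i j|

/-- The fMRI semiparametric model `y = S₁h₁ + ⋯ + S_r h_r + d + ε` together with
Conditions A1–A7. -/
structure FMRICore (Ω : Type) [MeasurableSpace Ω] (μ : Measure Ω) where
  isProb : IsProbabilityMeasure μ
  /-- number of stimulus types -/
  r : ℕ
  /-- length of the (nonzero part of the) HRF -/
  m : ℕ
  /-- dependence range of the errors -/
  g : ℕ
  hr : 0 < r
  hm : 0 < m
  /-- half-width of the kernel support -/
  L : ℝ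
  hL : 0 < L
  /-- the kernel -/
  K : ℝ → ℝ
  /-- the bandwidths -/
  b : ℕ → ℝ
  /-- the stimulus processes -/
  s : Fin r → ℝ → Ω → ℝ
  /-- presence probabilities of the stimuli -/
  p : Fin r → ℝ
  /-- the error process -/
  ε : ℕ → Ω → ℝ
  /-- the drift function -/
  d : ℝ → ℝ
  /-- error variance `σ²` -/
  σ2 : ℝ
  /-- the HRF parameter vector (possibly depending on `n`) -/
  h : ℕ → Fin r × Fin m → ℝ
  -- Condition A1: the drift has a bounded continuous second derivative
  hd_smooth : ContDiff ℝ 2 d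
  hd_bdd : ∃ C, ∀ t, |iteratedDeriv 2 d t| ≤ C
  -- Condition A2: the kernel is a symmetric probability density with compact support
  -- `[-L, L]`, Lipschitz continuous and bounded
  hK_symm : ∀ t, K (-t) = K t
  hK_lip : ∃ CK : NNReal, LipschitzWith CK K
  hK_nonneg : ∀ t, 0 ≤ K t
  hK_bdd : ∃ C, ∀ t, K t ≤ C
  hK_supp : ∀ t, L < |t| → K t = 0
  hK_density : ∫ t, K t = 1
  -- Condition A3: the errors form a stationary `g`-dependent sequence, with mean 0,
  -- variance `σ² ∈ (0,∞)`, finite fourth moment, and the eigenvalues of the correlation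
  -- matrix `R` are bounded away from 0 and ∞ uniformly in `n`
  hε_meas : ∀ i, Measurable (ε i)
  hε_stat : ∀ len shift : ℕ,
    μ.map (fun ω => fun i : Fin len => ε ((i : ℕ) + shift) ω) =
      μ.map fun ω => fun i : Fin len => ε (i : ℕ) ω
  hε_gdep : ∀ k : ℕ,
    IndepFun (fun ω => fun i : Fin (k + 1) => ε (i : ℕ) ω)
      (fun ω => fun i : ℕ => ε (k + g + 1 + i) ω) μ
  hε_mean : ∀ i, ∫ ω, ε i ω ∂μ = 0
  hσ2_pos : 0 < σ2
  hε_var : ∀ i, ∫ ω, ε i ω ^ 2 ∂μ = σ2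
  hε_mom4 : Integrable (fun ω => ε 0 ω ^ 4) μ
  /-- uniform lower bound for the eigenvalues of `R` -/
  ra : ℝ
  /-- uniform upper bound for the eigenvalues of `R` -/
  rb : ℝ
  hra : 0 < ra
  hR_eig : ∀ (n : ℕ) (x : Fin n → ℝ),
    ra * ∑ i, x i ^ 2 ≤
        x ⬝ᵥ ((Matrix.of fun i j : Fin n => (∫ ω, ε (i : ℕ) ω * ε (j : ℕ) ω ∂μ) / σ2) *ᵥ x) ∧
      x ⬝ᵥ ((Matrix.of fun i j : Fin n => (∫ ω, ε (i : ℕ) ω * ε (j : ℕ) ω ∂μ) / σ2) *ᵥ x) ≤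
        rb * ∑ i, x i ^ 2
  -- Condition A4: the stimuli are 0/1-valued, stationary with `P{s_j(t)=1} = p_j ∈ (0,1)`,
  -- `∑ p_j < 1`, independent at distinct time points, and independent of the error process
  hs_meas : ∀ j τ, Measurable (s j τ)
  hs_01 : ∀ j τ ω, s j τ ω = 0 ∨ s j τ ω = 1
  hp_pos : ∀ j, 0 < p j
  hp_lt : ∀ j, p j < 1
  hp_sum : ∑ j, p j < 1
  hs_mean : ∀ j τ, ∫ ω, s j τ ω ∂μ = p j
  hs_indep : ∀ j₁ j₂ τ₁ τ₂, τ₁ ≠ τ₂ → IndepFun (s j₁ τ₁) (s j₂ τ₂) μ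
  hsε_indep :
    IndepFun (fun ω => fun q : Fin r × ℝ => s q.1 q.2 ω) (fun ω => fun i : ℕ => ε i ω) μ
  -- Condition A5: bandwidth asymptotics `b → 0`, `nb → ∞`
  hb_pos : ∀ n, 0 < b n
  hb_lim : Tendsto b atTop (nhds 0)
  hnb_lim : Tendsto (fun n : ℕ => (n : ℝ) * b n) atTop atTop
  -- Condition A7: `cov(Sᵀ, Sᵀ) > 0`
  hScov : ∀ τ : ℝ, Matrix.PosDef (Matrix.of fun a c : Fin r × Fin m =>
    if a.2 = c.2 then (∫ ω, s a.1 τ ω * s c.1 τ ω ∂μ) - p a.1 * p c.1 else 0)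

namespace FMRICore

variable {Ω : Type} [MeasurableSpace Ω] {μ : Measure Ω} (M : FMRICore Ω μ)

/-- The true correlation matrix `R` of the errors: `cov(ε) = σ²R`. -/
def Rmat (n : ℕ) : Matrix (Fin n) (Fin n) ℝ :=
  Matrix.of fun i j => (∫ ω, M.ε (i : ℕ) ω * M.ε (j : ℕ) ω ∂μ) / M.σ2

/-- The local linear smoothing matrix `S_d` for sample size `n`. -/
def Sd (n : ℕ) : Matrix (Fin n) (Fin n) ℝ := smoothMat M.K (M.b n) n

/-- The `n × (rm)` Toeplitz design matrix `S = [S₁, …, S_r]`,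
with `S_j(k, ℓ) = s_j(t_k − t_ℓ)` for `k ≥ ℓ` and `0` otherwise. -/
def Smat (n : ℕ) (ω : Ω) : Matrix (Fin n) (Fin M.r × Fin M.m) ℝ :=
  Matrix.of fun k q =>
    if (q.2 : ℕ) ≤ (k : ℕ) then M.s q.1 ((((k : ℕ) : ℝ) - ((q.2 : ℕ) : ℝ)) / n) ω else 0

/-- `S̃ = (I − S_d) S`. -/
def Stil (n : ℕ) (ω : Ω) : Matrix (Fin n) (Fin M.r × Fin M.m) ℝ :=
  (1 - M.Sd n) * M.Smat n ω

/-- The observed data `y = Sh + d + ε`. -/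
def yvec (n : ℕ) (ω : Ω) : Fin n → ℝ :=
  fun i => (M.Smat n ω *ᵥ M.h n) i + M.d (dpt n i) + M.ε (i : ℕ) ω

/-- `ỹ = (I − S_d) y`. -/
def ytil (n : ℕ) (ω : Ω) : Fin n → ℝ := (1 - M.Sd n) *ᵥ M.yvec n ω

/-- The weighted least squares estimator `ĥ = (S̃ᵀR̂⁻¹S̃)⁻¹ S̃ᵀ R̂⁻¹ ỹ`. -/
def hhat (Rh : (n : ℕ) → Ω → Matrix (Fin n) (Fin n) ℝ) (n : ℕ) (ω : Ω) :
    Fin M.r × Fin M.m → ℝ :=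
  ((M.Stil n ω)ᵀ * (Rh n ω)⁻¹ * M.Stil n ω)⁻¹ *ᵥ
    ((M.Stil n ω)ᵀ *ᵥ ((Rh n ω)⁻¹ *ᵥ M.ytil n ω))

/-- The residual vector `r̂ = ỹ − S̃ĥ`. -/
def rhat (Rh : (n : ℕ) → Ω → Matrix (Fin n) (Fin n) ℝ) (n : ℕ) (ω : Ω) : Fin n → ℝ :=
  M.ytil n ω - M.Stil n ω *ᵥ M.hhat Rh n ω

/-- The semiparametric test statistic `𝕂`. -/
def Kstat {k : ℕ} (Rh : (n : ℕ) → Ω → Matrix (Fin n) (Fin n) ℝ)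
    (A : Matrix (Fin k) (Fin M.r × Fin M.m) ℝ) (n : ℕ) (ω : Ω) : ℝ :=
  ((A *ᵥ M.hhat Rh n ω) ⬝ᵥ
      ((A * ((M.Stil n ω)ᵀ * (Rh n ω)⁻¹ * M.Stil n ω)⁻¹ * Aᵀ)⁻¹ *ᵥ (A *ᵥ M.hhat Rh n ω))) /
    ((M.rhat Rh n ω ⬝ᵥ ((Rh n ω)⁻¹ *ᵥ M.rhat Rh n ω)) / ((n : ℝ) - (M.r : ℝ) * (M.m : ℝ)))

/-- The estimated drift `d̂ = S_d (y − Sĥ)`. -/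
def dhat (Rh : (n : ℕ) → Ω → Matrix (Fin n) (Fin n) ℝ) (n : ℕ) (ω : Ω) : Fin n → ℝ :=
  M.Sd n *ᵥ (M.yvec n ω - M.Smat n ω *ᵥ M.hhat Rh n ω)

/-- `d̂̃ = (I − S_d) d̂`. -/
def dtil (Rh : (n : ℕ) → Ω → Matrix (Fin n) (Fin n) ℝ) (n : ℕ) (ω : Ω) : Fin n → ℝ :=
  (1 - M.Sd n) *ᵥ M.dhat Rh n ω

/-- The bias-corrected estimator `ĥ_bc = ĥ − (S̃ᵀR̂⁻¹S̃)⁻¹ S̃ᵀ R̂⁻¹ d̂̃`. -/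
def hhatbc (Rh : (n : ℕ) → Ω → Matrix (Fin n) (Fin n) ℝ) (n : ℕ) (ω : Ω) :
    Fin M.r × Fin M.m → ℝ :=
  M.hhat Rh n ω - ((M.Stil n ω)ᵀ * (Rh n ω)⁻¹ * M.Stil n ω)⁻¹ *ᵥ
    ((M.Stil n ω)ᵀ *ᵥ ((Rh n ω)⁻¹ *ᵥ M.dtil Rh n ω))

/-- The bias-corrected residual `r̂_bc = r̂ − d̂̃`. -/
def rhatbc (Rh : (n : ℕ) → Ω → Matrix (Fin n) (Fin n) ℝ) (n : ℕ) (ω : Ω) : Fin n → ℝ :=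
  M.rhat Rh n ω - M.dtil Rh n ω

/-- The bias-corrected test statistic `𝕂_bc`. -/
def Kbc {k : ℕ} (Rh : (n : ℕ) → Ω → Matrix (Fin n) (Fin n) ℝ)
    (A : Matrix (Fin k) (Fin M.r × Fin M.m) ℝ) (n : ℕ) (ω : Ω) : ℝ :=
  ((A *ᵥ M.hhatbc Rh n ω) ⬝ᵥ
      ((A * ((M.Stil n ω)ᵀ * (Rh n ω)⁻¹ * M.Stil n ω)⁻¹ * Aᵀ)⁻¹ *ᵥ (A *ᵥ M.hhatbc Rh n ω))) /
    ((M.rhatbc Rh n ω ⬝ᵥ ((Rh n ω)⁻¹ *ᵥ M.rhatbc Rh n ω)) / ((n : ℝ) - (M.r : ℝ) * (M.m : ℝ)))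

end FMRICore

/-- Condition A8: the estimator `R̂` of the correlation matrix is symmetric, satisfies
`E(‖R̂⁻¹ − R⁻¹‖²_∞) = o(1)`, and the errors and stimuli have conditional second moments,
given `R̂`, equal to the unconditional ones. -/
structure EstA8 {Ω : Type} [MeasurableSpace Ω] {μ : Measure Ω} (M : FMRICore Ω μ) where
  /-- the estimator `R̂` of the correlation matrix -/
  Rh : (n : ℕ) → Ω → Matrix (Fin n) (Fin n) ℝ
  meas : ∀ n, Measurable fun ω => fun i j : Fin n => Rh n ω i j
  symm : ∀ n ω, (Rh n ω).IsSymm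
  cons : Tendsto (fun n => ∫ ω, infNorm ((Rh n ω)⁻¹ - (M.Rmat n)⁻¹) ^ 2 ∂μ) atTop (nhds 0)
  εcond : ∀ n i j : ℕ,
    MeasureTheory.condExp
        (MeasurableSpace.comap (fun ω => fun i' j' : Fin n => Rh n ω i' j') inferInstance) μ
        (fun ω => M.ε i ω * M.ε j ω) =ᵐ[μ]
      fun _ => ∫ ω, M.ε i ω * M.ε j ω ∂μ
  scond : ∀ (n : ℕ) (j : Fin M.r) (τ₁ τ₂ : ℝ),
    MeasureTheory.condExp
        (MeasurableSpace.comap (fun ω => fun i' j' : Fin n => Rh n ω i' j') inferInstance) μ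
        (fun ω => M.s j τ₁ ω * M.s j τ₂ ω) =ᵐ[μ]
      fun _ => ∫ ω, M.s j τ₁ ω * M.s j τ₂ ω ∂μ

/-!
Write `R = rb • (1 - A)`. Since `R` is symmetric with quadratic form between `ra` and `rb`,
the Rayleigh quotient gives `‖A‖₂ ≤ q := 1 - ra / rb < 1`, so `R⁻¹ = rb⁻¹ • ∑ₖ Aᵏ` (Neumann
series) and every entry of `Aᵏ` is at most `qᵏ`. By `g`-dependence `R`, hence `A`, is banded of
width `g`, so `Aᵏ` is banded of width `k g` and its absolute row sums are at most
`(2 k g + 1) qᵏ`, which is summable in `k`.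

For the local linear smoother, the determinant of `X(tᵢ)ᵀ W(tᵢ) X(tᵢ)` is a sum over pairs of
design points; a window on which the kernel is bounded below yields order `(n b)²` pairs of
weight `b⁻²` at distance of order `b`, so it is at least of order `(n b)²`. Hence the entries of
`S_d` are `O(1 / (n b))`, and they vanish outside a band of width `L n b`, so that its absolute
row and column sums are bounded once `b` is small and `n b` is large.

Both bounds are bounds on the `ℓ∞` operator norm of the matrix and of its transpose, and that
norm is submultiplicative.
-/

open Finset

theorem sum_abs_tsum_le {ι : Type*} [Fintype ι] {a : ℕ → ι → ℝ} {b : ℕ → ℝ} (hb : Summable b)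
    (h : ∀ k, ∑ j, |a k j| ≤ b k) : ∑ j, |∑' k, a k j| ≤ ∑' k, b k := by
  have hsum : ∀ j, Summable fun k => |a k j| := fun j =>
    hb.of_nonneg_of_le (fun k => abs_nonneg _)
      fun k => (Finset.single_le_sum (fun j _ => abs_nonneg (a k j)) (Finset.mem_univ j)).trans
        (h k)
  calc ∑ j, |∑' k, a k j| ≤ ∑ j, ∑' k, |a k j| := Finset.sum_le_sum fun j _ => by
        have := norm_tsum_le_tsum_norm (f := fun k => a k j)
          (by simpa only [Real.norm_eq_abs] using hsum j)
        simpa only [Real.norm_eq_abs] using this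
    _ = ∑' k, ∑ j, |a k j| := (Summable.tsum_finsetSum fun j _ => hsum j).symm
    _ ≤ ∑' k, b k :=
        Summable.tsum_le_tsum h (summable_sum fun j _ => hsum j) hb

theorem two_mul_sum_mul_sum_sub_sq {ι : Type*} [Fintype ι] (w x : ι → ℝ) :
    2 * ((∑ j, w j) * (∑ j, w j * x j ^ 2) - (∑ j, w j * x j) ^ 2) =
      ∑ j, ∑ l, w j * w l * (x j - x l) ^ 2 := by
  have h : ∀ j l, w j * w l * (x j - x l) ^ 2 =
      w j * x j ^ 2 * w l + w j * (w l * x l ^ 2) - 2 * (w j * x j * (w l * x l)) := by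
    intro j l; ring
  simp_rw [h, Finset.sum_sub_distrib, Finset.sum_add_distrib, ← Finset.mul_sum, ← Finset.sum_mul]
  ring

theorem card_mul_card_mul_le_sum_sum {ι : Type*} [Fintype ι] {w x : ι → ℝ} (hw : ∀ j, 0 ≤ w j)
    {G₁ G₂ : Finset ι} {κ s : ℝ} (hκ : 0 ≤ κ) (hs : 0 ≤ s) (hG₁ : ∀ l ∈ G₁, κ ≤ w l)
    (hG₂ : ∀ j ∈ G₂, κ ≤ w j) (hsep : ∀ j ∈ G₂, ∀ l ∈ G₁, s ≤ x j - x l) :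
    #G₂ * #G₁ * (κ * κ * s ^ 2) ≤ ∑ j, ∑ l, w j * w l * (x j - x l) ^ 2 := by
  have hterm : ∀ j l, 0 ≤ w j * w l * (x j - x l) ^ 2 := fun j l => by
    have := hw j; have := hw l; positivity
  calc (#G₂ * #G₁ * (κ * κ * s ^ 2) : ℝ) = ∑ j ∈ G₂, ∑ l ∈ G₁, κ * κ * s ^ 2 := by
        simp [mul_assoc]
    _ ≤ ∑ j ∈ G₂, ∑ l ∈ G₁, w j * w l * (x j - x l) ^ 2 :=
        Finset.sum_le_sum fun j hj => Finset.sum_le_sum fun l hl =>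
          mul_le_mul (mul_le_mul (hG₂ j hj) (hG₁ l hl) hκ (hw j))
            (pow_le_pow_left₀ hs (hsep j hj l hl) 2) (by positivity) (mul_nonneg (hw j) (hw l))
    _ ≤ ∑ j ∈ G₂, ∑ l, w j * w l * (x j - x l) ^ 2 :=
        Finset.sum_le_sum fun j _ => Finset.sum_le_sum_of_subset_of_nonneg (Finset.subset_univ _)
          fun l _ _ => hterm j l
    _ ≤ ∑ j, ∑ l, w j * w l * (x j - x l) ^ 2 :=
        Finset.sum_le_sum_of_subset_of_nonneg (Finset.subset_univ _)
          fun j _ _ => Finset.sum_nonneg fun l _ => hterm j l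

theorem sub_sub_one_le_card_filter {n : ℕ} {A B : ℝ} (hA : 0 ≤ A) (hB : B ≤ n - 1) :
    B - A - 1 ≤ #{j : Fin n | A ≤ ((j : ℕ) : ℝ) ∧ ((j : ℕ) : ℝ) ≤ B} := by
  rcases lt_or_ge B 0 with hB0 | hB0
  · linarith [(#{j : Fin n | A ≤ ((j : ℕ) : ℝ) ∧ ((j : ℕ) : ℝ) ≤ B}).cast_nonneg (α := ℝ)]
  have hfloor : ⌊B⌋₊ < n := by
    rw [← Nat.cast_lt (α := ℝ)]
    linarith [Nat.floor_le hB0]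
  have hcard : #(Finset.Icc ⌈A⌉₊ ⌊B⌋₊) ≤
      #{j : Fin n | A ≤ ((j : ℕ) : ℝ) ∧ ((j : ℕ) : ℝ) ≤ B} := by
    refine Finset.card_le_card_of_injOn (fun m => ⟨m % n, Nat.mod_lt m (by omega)⟩)
      (fun m hm => ?_) fun x hx y hy h => ?_
    · simp only [Finset.coe_Icc, Set.mem_Icc] at hm
      simp only [Finset.coe_filter, Finset.mem_univ, true_and, Set.mem_ofPred_eq,
        Nat.mod_eq_of_lt (hm.2.trans_lt hfloor)]
      exact ⟨(Nat.le_ceil A).trans (by exact_mod_cast hm.1),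
        (Nat.cast_le.mpr hm.2).trans (Nat.floor_le hB0)⟩
    · simp only [Finset.coe_Icc, Set.mem_Icc] at hx hy
      simpa [Nat.mod_eq_of_lt (hx.2.trans_lt hfloor), Nat.mod_eq_of_lt (hy.2.trans_lt hfloor)]
        using h
  rw [Nat.card_Icc] at hcard
  have h1 : B - 1 < ⌊B⌋₊ := by linarith [Nat.lt_floor_add_one B]
  have h2 : (⌈A⌉₊ : ℝ) < A + 1 := Nat.ceil_lt_add_one hA
  have h3 : ((⌊B⌋₊ + 1 : ℕ) : ℝ) ≤ ((⌊B⌋₊ + 1 - ⌈A⌉₊ : ℕ) : ℝ) + ⌈A⌉₊ := by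
    exact_mod_cast le_tsub_add
  push_cast at h3
  have h4 := (Nat.cast_le (α := ℝ)).mpr hcard
  linarith

theorem card_filter_abs_sub_le {n : ℕ} (c : ℝ) {w : ℝ} (hw : 0 ≤ w) :
    (#{j : Fin n | |((j : ℕ) : ℝ) - c| ≤ w} : ℝ) ≤ 2 * w + 1 := by
  have hcard : #{j : Fin n | |((j : ℕ) : ℝ) - c| ≤ w} ≤ #(Finset.Icc ⌈c - w⌉ ⌊c + w⌋) := by
    refine Finset.card_le_card_of_injOn (fun j => ((j : ℕ) : ℤ)) (fun j hj => ?_)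
      (fun x _ y _ h => Fin.ext (by simpa using h))
    simp only [Finset.coe_filter, Finset.mem_univ, true_and, Set.mem_ofPred_eq, abs_le] at hj
    simp only [Finset.coe_Icc, Set.mem_Icc, Int.ceil_le, Int.le_floor]
    push_cast
    constructor <;> linarith
  have hIcc : ((⌊c + w⌋ + 1 - ⌈c - w⌉ : ℤ) : ℝ) ≤ 2 * w + 1 := by
    push_cast
    linarith [Int.floor_le (c + w), Int.le_ceil (c - w)]
  rw [Int.card_Icc] at hcard
  calc (#{j : Fin n | |((j : ℕ) : ℝ) - c| ≤ w} : ℝ) ≤ ((⌊c + w⌋ + 1 - ⌈c - w⌉).toNat : ℝ) := by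
        exact_mod_cast hcard
    _ ≤ 2 * w + 1 := by
        rcases le_or_gt 0 (⌊c + w⌋ + 1 - ⌈c - w⌉) with h | h
        · rwa [← Int.cast_natCast, Int.toNat_of_nonneg h]
        · rw [Int.toNat_of_nonpos h.le]
          simp only [CharP.cast_eq_zero]
          linarith

namespace Matrix

variable {n : ℕ}

def IsBanded (A : Matrix (Fin n) (Fin n) ℝ) (w : ℝ) : Prop :=
  ∀ i j : Fin n, w < |((j : ℕ) : ℝ) - (i : ℕ)| → A i j = 0

theorem IsBanded.transpose {A : Matrix (Fin n) (Fin n) ℝ} {w : ℝ} (hA : A.IsBanded w) :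
    Aᵀ.IsBanded w := fun i j h => hA j i (by rwa [abs_sub_comm])

theorem isBanded_one : (1 : Matrix (Fin n) (Fin n) ℝ).IsBanded 0 := by
  intro i j h
  rw [one_apply_ne]
  rintro rfl
  simp at h

theorem IsBanded.mul {A B : Matrix (Fin n) (Fin n) ℝ} {v w : ℝ} (hA : A.IsBanded v)
    (hB : B.IsBanded w) : (A * B).IsBanded (v + w) := by
  intro i j h
  rw [mul_apply]
  refine Finset.sum_eq_zero fun l _ => ?_
  by_cases hil : v < |((l : ℕ) : ℝ) - (i : ℕ)|
  · rw [hA i l hil, zero_mul]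
  · have : w < |((j : ℕ) : ℝ) - (l : ℕ)| := by
      have := abs_sub_le ((j : ℕ) : ℝ) (l : ℕ) (i : ℕ)
      linarith
    rw [hB l j this, mul_zero]

theorem IsBanded.pow {A : Matrix (Fin n) (Fin n) ℝ} {w : ℝ} (hA : A.IsBanded w) (k : ℕ) :
    (A ^ k).IsBanded (k * w) := by
  induction k with
  | zero => simpa using isBanded_one
  | succ k ih => simpa [pow_succ, add_mul] using ih.mul hA

theorem IsBanded.sum_abs_le {A : Matrix (Fin n) (Fin n) ℝ} {w c : ℝ} (hA : A.IsBanded w)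
    (hw : 0 ≤ w) (i : Fin n) (hc : ∀ j, |A i j| ≤ c) : ∑ j, |A i j| ≤ (2 * w + 1) * c := by
  have hc0 : 0 ≤ c := (abs_nonneg _).trans (hc i)
  set band := ({j : Fin n | |((j : ℕ) : ℝ) - (i : ℕ)| ≤ w} : Finset (Fin n))
  calc ∑ j, |A i j| = ∑ j ∈ band, |A i j| := by
        refine (Finset.sum_subset (Finset.subset_univ _) fun j _ hj => ?_).symm
        simp only [band, Finset.mem_filter, Finset.mem_univ, true_and, not_le] at hj
        rw [hA i j hj, abs_zero]
    _ ≤ #band * c := by simpa using Finset.sum_le_sum fun j (_ : j ∈ band) => hc j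
    _ ≤ (2 * w + 1) * c := by gcongr; exact card_filter_abs_sub_le _ hw

section L2OpNorm

open scoped Matrix.Norms.L2Operator RealInnerProductSpace

variable {ι : Type*} [Fintype ι] [DecidableEq ι]

theorem IsHermitian.l2_opNorm_le {A : Matrix ι ι ℝ} (hA : A.IsHermitian) {q : ℝ}
    (hq : 0 ≤ q) (h : ∀ x : ι → ℝ, |x ⬝ᵥ A *ᵥ x| ≤ q * (x ⬝ᵥ x)) : ‖A‖ ≤ q := by
  rw [cstar_norm_def, ContinuousLinearMap.norm_eq_iSup_rayleighQuotient _
    (isSymmetric_toEuclideanLin_iff.mpr hA)]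
  refine ciSup_le fun x => ?_
  rw [ContinuousLinearMap.rayleighQuotient, ContinuousLinearMap.reApplyInnerSelf_apply,
    RCLike.re_to_real, real_inner_comm, inner_toEuclideanCLM, abs_div, abs_sq]
  rcases eq_or_ne x 0 with rfl | hx
  · simp [hq]
  · have hx2 : ‖x‖ ^ 2 = x.ofLp ⬝ᵥ x.ofLp := by
      rw [← real_inner_self_eq_norm_sq, EuclideanSpace.inner_eq_star_dotProduct, star_trivial]
    rw [div_le_iff₀ (by positivity), hx2]
    exact h x.ofLp

theorem abs_apply_le_l2_opNorm (A : Matrix ι ι ℝ) (i j : ι) : |A i j| ≤ ‖A‖ := by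
  have h := A.l2_opNorm_mulVec (EuclideanSpace.single j 1)
  rw [EuclideanSpace.single, PiLp.norm_single, norm_one, mul_one] at h
  refine le_trans ?_ h
  simpa using PiLp.norm_apply_le ((EuclideanSpace.equiv ι ℝ).symm (A *ᵥ Pi.single j 1)) i

theorem inv_eq_smul_tsum_pow (R : Matrix ι ι ℝ) {c : ℝ} (h : ‖1 - c⁻¹ • R‖ < 1) :
    R⁻¹ = c⁻¹ • ∑' k : ℕ, (1 - c⁻¹ • R) ^ k := by
  refine inv_eq_left_inv ?_
  have := geom_series_mul_neg _ h
  rwa [sub_sub_cancel, mul_smul_comm, ← smul_mul_assoc] at this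

theorem l2_opNorm_one_sub_smul_le {R : Matrix ι ι ℝ} (hR : R.IsHermitian) {ra rb : ℝ}
    (hrb : 0 < rb) (hrab : ra ≤ rb) (hlo : ∀ x, ra * (x ⬝ᵥ x) ≤ x ⬝ᵥ R *ᵥ x)
    (hhi : ∀ x, x ⬝ᵥ R *ᵥ x ≤ rb * (x ⬝ᵥ x)) : ‖1 - rb⁻¹ • R‖ ≤ 1 - ra / rb := by
  have hq : 0 ≤ 1 - ra / rb := by rw [sub_nonneg, div_le_one hrb]; exact hrab
  have hherm : (1 - rb⁻¹ • R).IsHermitian := isHermitian_one.sub (hR.smul (IsSelfAdjoint.all rb⁻¹))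
  refine hherm.l2_opNorm_le hq fun x => ?_
  have hform : x ⬝ᵥ (1 - rb⁻¹ • R) *ᵥ x = x ⬝ᵥ x - (x ⬝ᵥ R *ᵥ x) / rb := by
    rw [sub_mulVec, one_mulVec, smul_mulVec, dotProduct_sub, dotProduct_smul, smul_eq_mul,
      inv_mul_eq_div]
  have hxx : 0 ≤ x ⬝ᵥ x := by
    simpa [dotProduct, ← sq] using Finset.sum_nonneg fun i _ => sq_nonneg (x i)
  rw [hform, abs_le]
  constructor
  · have := div_le_div_of_nonneg_right (hhi x) hrb.le
    rw [mul_div_cancel_left₀ _ hrb.ne'] at this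
    nlinarith [mul_nonneg hq hxx]
  · have := div_le_div_of_nonneg_right (hlo x) hrb.le
    rw [sub_mul, one_mul, div_mul_eq_mul_div]
    linarith

theorem sum_abs_inv_apply_le {n g : ℕ} {R : Matrix (Fin n) (Fin n) ℝ} (hR : R.IsHermitian)
    (hband : R.IsBanded g) {ra rb : ℝ} (hra : 0 < ra) (hlo : ∀ x, ra * (x ⬝ᵥ x) ≤ x ⬝ᵥ R *ᵥ x)
    (hhi : ∀ x, x ⬝ᵥ R *ᵥ x ≤ rb * (x ⬝ᵥ x)) (i : Fin n) :
    ∑ j, |R⁻¹ i j| ≤ rb⁻¹ * ∑' k : ℕ, (2 * (k * g) + 1) * (1 - ra / rb) ^ k := by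
  have hrab : ra ≤ rb := by
    have h := (hlo (Pi.single i 1)).trans (hhi (Pi.single i 1))
    simpa using h
  have hrb : 0 < rb := hra.trans_le hrab
  set q := 1 - ra / rb
  have hq0 : 0 ≤ q := by rw [sub_nonneg, div_le_one hrb]; exact hrab
  have hq1 : q < 1 := by simp only [q]; linarith [div_pos hra hrb]
  set A := 1 - rb⁻¹ • R with hA
  have hAq : ‖A‖ ≤ q := l2_opNorm_one_sub_smul_le hR hrb hrab hlo hhi
  have hAband : A.IsBanded g := fun i j h => by
    have hij : i ≠ j := by rintro rfl; simp at h; linarith [(g.cast_nonneg : (0 : ℝ) ≤ g)]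
    simp [hA, one_apply_ne hij, hband i j h]
  have hrow : ∀ k : ℕ, ∑ j, |(A ^ k) i j| ≤ (2 * (k * g) + 1) * q ^ k := fun k =>
    (hAband.pow k).sum_abs_le (by positivity) i fun j =>
      (abs_apply_le_l2_opNorm _ i j).trans <| by
        have : Nonempty (Fin n) := ⟨i⟩
        exact (norm_pow_le A k).trans (pow_le_pow_left₀ (norm_nonneg A) hAq k)
  have hsummable : Summable fun k : ℕ => (2 * (k * g) + 1) * q ^ k := by
    have h1 := summable_pow_mul_geometric_of_norm_lt_one (R := ℝ) 1
      (by rwa [Real.norm_of_nonneg hq0])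
    refine ((h1.mul_left (2 * (g : ℝ))).add (summable_geometric_of_lt_one hq0 hq1)).congr
      fun k => ?_
    ring
  have hentry : ∀ j, R⁻¹ i j = rb⁻¹ * ∑' k : ℕ, (A ^ k) i j := fun j => by
    rw [inv_eq_smul_tsum_pow R (hAq.trans_lt hq1), smul_apply, smul_eq_mul]
    exact congrArg _ ((summable_geometric_of_norm_lt_one (hAq.trans_lt hq1)).hasSum.map
      (entryAddMonoidHom ℝ i j) (continuous_apply_apply i j)).tsum_eq.symm
  simp_rw [hentry, abs_mul, abs_of_pos (inv_pos.mpr hrb), ← Finset.mul_sum]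
  exact mul_le_mul_of_nonneg_left (sum_abs_tsum_le hsummable hrow) (inv_pos.mpr hrb).le

end L2OpNorm

end Matrix

section AVUS

open scoped Matrix.Norms.Operator

theorem Matrix.sum_abs_le_linfty_opNorm {m n : Type*} [Fintype m] [Fintype n]
    (A : Matrix m n ℝ) (i : m) : ∑ j, |A i j| ≤ ‖A‖ := by
  have h := Finset.le_sup (f := fun i => ∑ j, ‖A i j‖₊) (Finset.mem_univ i)
  rw [← NNReal.coe_le_coe] at h
  simpa [linfty_opNorm_def] using h

theorem Matrix.linfty_opNorm_le_of_sum_abs_le {m n : Type*} [Fintype m] [Fintype n]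
    {A : Matrix m n ℝ} {C : ℝ} (hC : 0 ≤ C) (h : ∀ i, ∑ j, |A i j| ≤ C) : ‖A‖ ≤ C := by
  rw [linfty_opNorm_def, ← NNReal.coe_mk C hC, NNReal.coe_le_coe, Finset.sup_le_iff]
  intro i _
  rw [← NNReal.coe_le_coe]
  simpa using h i

theorem Matrix.sum_abs_le_of_linfty_opNorm_le {n : Type*} [Fintype n] {A : Matrix n n ℝ}
    {C D : ℝ} (hA : ‖A‖ ≤ C ∧ ‖Aᵀ‖ ≤ C) (hCD : C ≤ D) :
    (∀ j, ∑ i, |A i j| ≤ D) ∧ (∀ i, ∑ j, |A i j| ≤ D) :=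
  ⟨fun j => ((Aᵀ.sum_abs_le_linfty_opNorm j).trans hA.2).trans hCD,
    fun i => ((A.sum_abs_le_linfty_opNorm i).trans hA.1).trans hCD⟩

theorem Matrix.IsBanded.linfty_opNorm_le {n : ℕ} {A : Matrix (Fin n) (Fin n) ℝ} {w c : ℝ}
    (hA : A.IsBanded w) (hw : 0 ≤ w) (hc : 0 ≤ c) (h : ∀ i j, |A i j| ≤ c) :
    ‖A‖ ≤ (2 * w + 1) * c :=
  linfty_opNorm_le_of_sum_abs_le (by positivity) fun i => hA.sum_abs_le hw i (h i)

/-- `‖·‖` is the `ℓ∞` operator norm, the maximal absolute row sum, so this bounds the absolute row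
and column sums of `B n` uniformly in `n`. -/
def IsAVUS (B : (n : ℕ) → Matrix (Fin n) (Fin n) ℝ) : Prop :=
  ∃ C, ∀ n, ‖B n‖ ≤ C ∧ ‖(B n)ᵀ‖ ≤ C

namespace IsAVUS

variable {A B : (n : ℕ) → Matrix (Fin n) (Fin n) ℝ}

theorem one : IsAVUS fun _ => 1 :=
  ⟨1, fun _ => by
    simpa using Matrix.linfty_opNorm_le_of_sum_abs_le (A := (1 : Matrix (Fin _) (Fin _) ℝ))
      zero_le_one fun i => by simp [Matrix.one_apply, apply_ite (abs : ℝ → ℝ)]⟩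

theorem sub (hA : IsAVUS A) (hB : IsAVUS B) : IsAVUS fun n => A n - B n := by
  obtain ⟨C, hC⟩ := hA
  obtain ⟨D, hD⟩ := hB
  refine ⟨C + D, fun n => ⟨(norm_sub_le _ _).trans (add_le_add (hC n).1 (hD n).1), ?_⟩⟩
  rw [Matrix.transpose_sub]
  exact (norm_sub_le _ _).trans (add_le_add (hC n).2 (hD n).2)

theorem mul (hA : IsAVUS A) (hB : IsAVUS B) : IsAVUS fun n => A n * B n := by
  obtain ⟨C, hC⟩ := hA
  obtain ⟨D, hD⟩ := hB
  have hC0 : 0 ≤ C := (norm_nonneg _).trans (hC 0).1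
  refine ⟨C * D, fun n => ⟨?_, ?_⟩⟩
  · exact (Matrix.linfty_opNorm_mul _ _).trans
      (mul_le_mul (hC n).1 (hD n).1 (norm_nonneg _) hC0)
  · rw [Matrix.transpose_mul, mul_comm C]
    exact (Matrix.linfty_opNorm_mul _ _).trans
      (mul_le_mul (hD n).2 (hC n).2 (norm_nonneg _) ((norm_nonneg _).trans (hD 0).1))

theorem transpose (hA : IsAVUS A) : IsAVUS fun n => (A n)ᵀ := by
  obtain ⟨C, hC⟩ := hA
  exact ⟨C, fun n => by simpa only [Matrix.transpose_transpose] using (hC n).symm⟩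

theorem of_isSymm (hsymm : ∀ n, (A n).IsSymm) {C : ℝ} (h : ∀ n i, ∑ j, |A n i j| ≤ C) :
    IsAVUS A := by
  have hC : 0 ≤ C := (Finset.sum_nonneg fun _ _ => abs_nonneg _).trans (h 1 0)
  refine ⟨C, fun n => ?_⟩
  rw [hsymm n]
  exact ⟨Matrix.linfty_opNorm_le_of_sum_abs_le hC (h n),
    Matrix.linfty_opNorm_le_of_sum_abs_le hC (h n)⟩

theorem of_eventually {C : ℝ} (h : ∀ᶠ n in atTop, ‖A n‖ ≤ C ∧ ‖(A n)ᵀ‖ ≤ C) : IsAVUS A := by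
  obtain ⟨D, hD⟩ := (isBoundedUnder_of_eventually_le (u := fun n => max ‖A n‖ ‖(A n)ᵀ‖)
    (h.mono fun n hn => max_le hn.1 hn.2)).bddAbove_range
  exact ⟨D, fun n => max_le_iff.mp (hD ⟨n, rfl⟩)⟩

end IsAVUS

end AVUS

section LocalLinear

variable {K : ℝ → ℝ} {b L Kmax : ℝ} {n : ℕ}

def kernelWeights (K : ℝ → ℝ) (b : ℝ) (n : ℕ) : Matrix (Fin n) (Fin n) ℝ :=
  Matrix.of fun i j => scaledKer K b (dpt n j - dpt n i)

def localMoment (K : ℝ → ℝ) (b : ℝ) (n : ℕ) (i : Fin n) (p : ℕ) : ℝ :=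
  ∑ j, kernelWeights K b n i j * (dpt n j - dpt n i) ^ p

theorem locMat_eq (i : Fin n) :
    locMat K b n i = !![localMoment K b n i 0, localMoment K b n i 1;
      localMoment K b n i 1, localMoment K b n i 2] := by
  ext a c
  fin_cases a <;> fin_cases c <;> rfl

theorem det_locMat (i : Fin n) : (locMat K b n i).det =
    localMoment K b n i 0 * localMoment K b n i 2 - localMoment K b n i 1 ^ 2 := by
  rw [locMat_eq, Matrix.det_fin_two_of, sq]

theorem smoothMat_apply (i j : Fin n) : smoothMat K b n i j = (locMat K b n i).det⁻¹ *
    (localMoment K b n i 2 - localMoment K b n i 1 * (dpt n j - dpt n i)) *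
      kernelWeights K b n i j := by
  rw [smoothMat, Matrix.of_apply, det_locMat, locMat_eq, Matrix.inv_def, Matrix.adjugate_fin_two,
    Matrix.det_fin_two_of]
  simp only [Matrix.mulVec, dotProduct, Fin.sum_univ_two, Ring.inverse_eq_inv',
    Matrix.smul_apply, smul_eq_mul, Matrix.of_apply, Matrix.cons_val', Matrix.cons_val_zero,
    Matrix.cons_val_one, Matrix.empty_val', Matrix.cons_val_fin_one, kernelWeights]
  ring

theorem dpt_sub_dpt (i j : Fin n) : dpt n j - dpt n i = (((j : ℕ) : ℝ) - (i : ℕ)) / n := by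
  rw [dpt, dpt, div_sub_div_same]
  ring_nf

theorem kernelWeights_nonneg (hK0 : ∀ t, 0 ≤ K t) (hb : 0 ≤ b) (i j : Fin n) :
    0 ≤ kernelWeights K b n i j :=
  div_nonneg (hK0 _) hb

theorem kernelWeights_le (hKm : ∀ t, K t ≤ Kmax) (hb : 0 ≤ b) (i j : Fin n) :
    kernelWeights K b n i j ≤ Kmax / b :=
  div_le_div_of_nonneg_right (hKm _) hb

theorem abs_dpt_sub_le_of_kernelWeights_ne_zero (hsupp : ∀ t, L < |t| → K t = 0) (hb : 0 < b)
    {i j : Fin n} (h : kernelWeights K b n i j ≠ 0) : |dpt n j - dpt n i| ≤ L * b := by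
  by_contra hlt
  refine h ?_
  rw [kernelWeights, Matrix.of_apply, scaledKer, hsupp, zero_div]
  rw [abs_div, abs_of_pos hb, lt_div_iff₀ hb]
  linarith

theorem isBanded_kernelWeights (hsupp : ∀ t, L < |t| → K t = 0) (hb : 0 < b) :
    (kernelWeights K b n).IsBanded (L * (n * b)) := by
  intro i j h
  by_contra hne
  have hn : (0 : ℝ) < n := by exact_mod_cast i.pos
  have := abs_dpt_sub_le_of_kernelWeights_ne_zero hsupp hb hne
  rw [dpt_sub_dpt, abs_div, Nat.abs_cast, div_le_iff₀ hn] at this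
  linarith

theorem abs_localMoment_le (hK0 : ∀ t, 0 ≤ K t) (hsupp : ∀ t, L < |t| → K t = 0) (hb : 0 < b)
    (i : Fin n) (p : ℕ) : |localMoment K b n i p| ≤ (L * b) ^ p * localMoment K b n i 0 := by
  simp only [localMoment, pow_zero, mul_one, Finset.mul_sum]
  refine (Finset.abs_sum_le_sum_abs _ _).trans (Finset.sum_le_sum fun j _ => ?_)
  have hw := kernelWeights_nonneg hK0 hb.le i j (n := n)
  rw [abs_mul, abs_of_nonneg hw, abs_pow, mul_comm]
  rcases eq_or_ne (kernelWeights K b n i j) 0 with h | h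
  · simp [h]
  · exact mul_le_mul_of_nonneg_right
      (pow_le_pow_left₀ (abs_nonneg _) (abs_dpt_sub_le_of_kernelWeights_ne_zero hsupp hb h) p) hw

theorem localMoment_zero_le (hK0 : ∀ t, 0 ≤ K t) (hKm : ∀ t, K t ≤ Kmax)
    (hsupp : ∀ t, L < |t| → K t = 0) (hb : 0 < b) (hL : 0 ≤ L) (i : Fin n) :
    localMoment K b n i 0 ≤ (2 * (L * (n * b)) + 1) * (Kmax / b) := by
  have h := (isBanded_kernelWeights hsupp hb).sum_abs_le (by positivity) i
    fun j => (abs_of_nonneg (kernelWeights_nonneg hK0 hb.le i j)).trans_le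
      (kernelWeights_le hKm hb.le i j)
  simpa [localMoment, abs_of_nonneg (kernelWeights_nonneg hK0 hb.le i _)] using h

theorem two_mul_det_locMat (i : Fin n) : 2 * (locMat K b n i).det =
    ∑ j, ∑ l, kernelWeights K b n i j * kernelWeights K b n i l * (dpt n j - dpt n l) ^ 2 := by
  rw [det_locMat]
  convert two_mul_sum_mul_sum_sub_sq (kernelWeights K b n i) (fun j => dpt n j - dpt n i)
    using 3 <;> simp [localMoment]

theorem kernelWeights_ge_of_mem_window (hb : 0 < b) {κ η u : ℝ}
    (hwin : ∀ t, u ≤ t → t ≤ u + η → κ ≤ K t) {i j : Fin n}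
    (hj₀ : (i : ℕ) + n * b * u ≤ (j : ℕ)) (hj₁ : ((j : ℕ) : ℝ) ≤ (i : ℕ) + n * b * u + n * b * η) :
    κ / b ≤ kernelWeights K b n i j := by
  have hnb : 0 < n * b := mul_pos (by exact_mod_cast i.pos) hb
  have ht : (dpt n j - dpt n i) / b = (((j : ℕ) : ℝ) - (i : ℕ)) / (n * b) := by
    rw [dpt_sub_dpt, div_div]
  refine div_le_div_of_nonneg_right (hwin _ ?_ ?_) hb.le
  · rw [ht, le_div_iff₀ hnb]; linarith
  · rw [ht, div_le_iff₀ hnb]; linarith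

-- The first and last quarters of the rescaled window contain at least `W / 8` design points each,
-- with weights at least `κ / b` and mutual distances at least `b η / 2`.
theorem det_locMat_ge (hK0 : ∀ t, 0 ≤ K t) (hb : 0 < b) {κ η u : ℝ} (hκ : 0 ≤ κ) (hη : 0 < η)
    (hwin : ∀ t, u ≤ t → t ≤ u + η → κ ≤ K t) (i : Fin n)
    (h₀ : 0 ≤ (i : ℕ) + n * b * u) (h₁ : (i : ℕ) + n * b * u + n * b * η ≤ n - 1)
    (h₈ : 8 ≤ n * b * η) :
    (κ * η ^ 2 * (n * b)) ^ 2 / 512 ≤ (locMat K b n i).det := by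
  have hn : (0 : ℝ) < n := by exact_mod_cast i.pos
  set A : ℝ := (i : ℕ) + n * b * u
  set W : ℝ := n * b * η
  set G₁ := ({j : Fin n | A ≤ ((j : ℕ) : ℝ) ∧ ((j : ℕ) : ℝ) ≤ A + W / 4} : Finset (Fin n))
  set G₂ := ({j : Fin n | A + 3 * W / 4 ≤ ((j : ℕ) : ℝ) ∧ ((j : ℕ) : ℝ) ≤ A + W} : Finset (Fin n))
  have hG₁ : W / 8 ≤ #G₁ := by
    have := sub_sub_one_le_card_filter (n := n) h₀ (B := A + W / 4) (by linarith)
    linarith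
  have hG₂ : W / 8 ≤ #G₂ := by
    have := sub_sub_one_le_card_filter (n := n) (A := A + 3 * W / 4) (by linarith) h₁
    linarith
  have hpairs := card_mul_card_mul_le_sum_sum (x := dpt n) (G₁ := G₁) (G₂ := G₂)
    (kernelWeights_nonneg hK0 hb.le i) (div_nonneg hκ hb.le) (s := b * η / 2) (by positivity)
    (fun l hl => by
      simp only [G₁, Finset.mem_filter, Finset.mem_univ, true_and] at hl
      exact kernelWeights_ge_of_mem_window hb hwin hl.1 (by linarith))
    (fun j hj => by
      simp only [G₂, Finset.mem_filter, Finset.mem_univ, true_and] at hj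
      exact kernelWeights_ge_of_mem_window hb hwin (by linarith) hj.2)
    (fun j hj l hl => by
      simp only [G₁, G₂, Finset.mem_filter, Finset.mem_univ, true_and] at hj hl
      rw [dpt_sub_dpt l j, le_div_iff₀ hn]
      nlinarith)
  rw [← two_mul_det_locMat] at hpairs
  have hW : (κ * η ^ 2 * (n * b)) ^ 2 / 256 =
      W / 8 * (W / 8) * (κ / b * (κ / b) * (b * η / 2) ^ 2) := by
    field_simp
    ring
  have : W / 8 * (W / 8) * (κ / b * (κ / b) * (b * η / 2) ^ 2) ≤
      #G₂ * #G₁ * (κ / b * (κ / b) * (b * η / 2) ^ 2) := by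
    gcongr
  linarith

theorem isBanded_smoothMat (hsupp : ∀ t, L < |t| → K t = 0) (hb : 0 < b) :
    (smoothMat K b n).IsBanded (L * (n * b)) := fun i j h => by
  rw [smoothMat_apply, isBanded_kernelWeights hsupp hb i j h, mul_zero]

theorem abs_smoothMat_le (hK0 : ∀ t, 0 ≤ K t) (hKm : ∀ t, K t ≤ Kmax)
    (hsupp : ∀ t, L < |t| → K t = 0) (hb : 0 < b) (hLnb : 1 ≤ L * (n * b)) {c : ℝ} (hc : 0 < c)
    {i : Fin n} (hdet : c ≤ (locMat K b n i).det) (j : Fin n) :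
    |smoothMat K b n i j| ≤ 6 * L ^ 3 * (n * b) * Kmax ^ 2 / c := by
  have hnb : 0 < n * b := mul_pos (by exact_mod_cast i.pos) hb
  have hL : 0 < L := pos_of_mul_pos_left (one_pos.trans_le hLnb) hnb.le
  have hw := kernelWeights_nonneg hK0 hb.le i j
  have hKmax : 0 ≤ Kmax := (hK0 0).trans (hKm 0)
  rw [smoothMat_apply, abs_mul, abs_mul, abs_inv, abs_of_pos (hc.trans_le hdet), abs_of_nonneg hw]
  rcases eq_or_ne (kernelWeights K b n i j) 0 with h | h
  · rw [h, mul_zero]; positivity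
  have hm₀ := localMoment_zero_le hK0 hKm hsupp hb hL.le i
  have hm₁ := abs_localMoment_le hK0 hsupp hb i 1
  have hm₂ := abs_localMoment_le hK0 hsupp hb i 2
  have hδ := abs_dpt_sub_le_of_kernelWeights_ne_zero hsupp hb h
  have hnum : |localMoment K b n i 2 - localMoment K b n i 1 * (dpt n j - dpt n i)| ≤
      2 * (L * b) ^ 2 * (3 * L * (n * b) * (Kmax / b)) := by
    have hm₀' : localMoment K b n i 0 ≤ 3 * L * (n * b) * (Kmax / b) :=
      hm₀.trans (mul_le_mul_of_nonneg_right (by linarith) (by positivity))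
    calc _ ≤ |localMoment K b n i 2| + |localMoment K b n i 1| * |dpt n j - dpt n i| := by
          rw [← abs_mul]; exact abs_sub _ _
      _ ≤ (L * b) ^ 2 * localMoment K b n i 0 + (L * b) ^ 1 * localMoment K b n i 0 * (L * b) := by
          gcongr
          exact (abs_nonneg _).trans hm₁
      _ ≤ _ := by
          have := (abs_nonneg _).trans hm₁
          nlinarith [mul_le_mul_of_nonneg_left hm₀' (sq_nonneg (L * b))]
  calc _ ≤ c⁻¹ * (2 * (L * b) ^ 2 * (3 * L * (n * b) * (Kmax / b))) * (Kmax / b) := by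
        gcongr
        exact kernelWeights_le hKm hb.le i j
    _ = 6 * L ^ 3 * (n * b) * Kmax ^ 2 / c := by
        field_simp
        ring

-- A design point in the right half of `[0, n - 1]` uses the window `[t₀ - η, t₀]`, one in the
-- left half its mirror image `[-t₀, -t₀ + η]`: either way the rescaled window stays in the design.
theorem exists_design_window (hK_symm : ∀ t, K (-t) = K t) {κ η t₀ : ℝ}
    (hwin : ∀ t, t₀ - η ≤ t → t ≤ t₀ → κ ≤ K t) (ht₀ : -L ≤ t₀) (ht₀' : t₀ ≤ 0) (hb : 0 < b)
    (hbL : b * (L + η) ≤ 1 / 4) (hn : 2 ≤ n) (i : Fin n) :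
    ∃ u, (∀ t, u ≤ t → t ≤ u + η → κ ≤ K t) ∧
      0 ≤ (i : ℕ) + n * b * u ∧ (i : ℕ) + n * b * u + n * b * η ≤ n - 1 := by
  have hn' : (2 : ℝ) ≤ n := by exact_mod_cast hn
  have hi : ((i : ℕ) : ℝ) + 1 ≤ n := by exact_mod_cast i.isLt
  have hnb : 0 ≤ n * b := by positivity
  have hreach : n * b * (L + η) ≤ n / 4 := by nlinarith
  rcases le_or_gt n (2 * (i : ℕ)) with h | h
  · have h' : (n : ℝ) ≤ 2 * (i : ℕ) := by exact_mod_cast h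
    refine ⟨t₀ - η, fun t h₁ h₂ => hwin t h₁ (by linarith), ?_, ?_⟩
    · nlinarith
    · nlinarith
  · have h' : 2 * ((i : ℕ) : ℝ) + 1 ≤ n := by exact_mod_cast h
    refine ⟨-t₀, fun t h₁ h₂ => ?_, by nlinarith, by nlinarith⟩
    rw [← hK_symm]
    exact hwin _ (by linarith) (by linarith)

open scoped Matrix.Norms.Operator in
theorem linfty_opNorm_smoothMat_le (hK0 : ∀ t, 0 ≤ K t) (hKm : ∀ t, K t ≤ Kmax)
    (hK_symm : ∀ t, K (-t) = K t) (hsupp : ∀ t, L < |t| → K t = 0) {κ η t₀ : ℝ} (hκ : 0 < κ)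
    (hη : 0 < η) (hwin : ∀ t, t₀ - η ≤ t → t ≤ t₀ → κ ≤ K t) (ht₀ : -L ≤ t₀) (ht₀' : t₀ ≤ 0)
    (hb : 0 < b) (hbL : b * (L + η) ≤ 1 / 4) (h₈ : 8 ≤ n * b * η) (hLnb : 1 ≤ L * (n * b)) :
    ‖smoothMat K b n‖ ≤ 9216 * L ^ 4 * Kmax ^ 2 / (κ * η ^ 2) ^ 2 ∧
      ‖(smoothMat K b n)ᵀ‖ ≤ 9216 * L ^ 4 * Kmax ^ 2 / (κ * η ^ 2) ^ 2 := by
  have hLη : 0 < L + η := by linarith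
  have hn : 2 ≤ n := by
    have : (8 : ℝ) ≤ n / 4 := by nlinarith [mul_le_mul_of_nonneg_left hbL (Nat.cast_nonneg n)]
    exact_mod_cast (by linarith : (2 : ℝ) ≤ n)
  have hnb : 0 < n * b := by positivity
  have hL : 0 < L := pos_of_mul_pos_left (one_pos.trans_le hLnb) hnb.le
  have hKmax : 0 ≤ Kmax := (hK0 0).trans (hKm 0)
  set c := (κ * η ^ 2 * (n * b)) ^ 2 / 512
  have hc : 0 < c := by positivity
  have hentry : ∀ i j, |smoothMat K b n i j| ≤ 6 * L ^ 3 * (n * b) * Kmax ^ 2 / c := by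
    intro i j
    obtain ⟨u, hu, h₀, h₁⟩ := exists_design_window hK_symm hwin ht₀ ht₀' hb hbL hn i
    exact abs_smoothMat_le hK0 hKm hsupp hb hLnb hc
      (det_locMat_ge hK0 hb hκ.le hη hu i h₀ h₁ h₈) j
  have hC : (2 * (L * (n * b)) + 1) * (6 * L ^ 3 * (n * b) * Kmax ^ 2 / c) ≤
      9216 * L ^ 4 * Kmax ^ 2 / (κ * η ^ 2) ^ 2 := by
    calc _ ≤ 3 * (L * (n * b)) * (6 * L ^ 3 * (n * b) * Kmax ^ 2 / c) := by gcongr; linarith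
      _ = _ := by field_simp; ring
  have hband := isBanded_smoothMat (n := n) hsupp hb
  exact ⟨(hband.linfty_opNorm_le (by positivity) (by positivity) hentry).trans hC,
    (hband.transpose.linfty_opNorm_le (by positivity) (by positivity)
      fun i j => hentry j i).trans hC⟩

end LocalLinear

theorem exists_window_lower_bound_of_integral_eq_one {K : ℝ → ℝ} {L : ℝ} (hK : Continuous K)
    (hK_symm : ∀ t, K (-t) = K t) (hK0 : ∀ t, 0 ≤ K t) (hsupp : ∀ t, L < |t| → K t = 0)
    (hK_density : ∫ t, K t = 1) :
    ∃ κ > 0, ∃ η > 0, ∃ t₀, -L ≤ t₀ ∧ t₀ ≤ 0 ∧ ∀ t, t₀ - η ≤ t → t ≤ t₀ → κ ≤ K t := by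
  obtain ⟨t₁, ht₁⟩ : ∃ t₁, K t₁ ≠ 0 := by
    by_contra! h
    simp [show K = 0 from funext h] at hK_density
  have hKt₁ : K (-|t₁|) = K t₁ := by
    rcases abs_cases t₁ with ⟨h, _⟩ | ⟨h, _⟩ <;> simp [h, hK_symm]
  have ha : 0 < K (-|t₁|) := hKt₁ ▸ (hK0 t₁).lt_of_ne' ht₁
  obtain ⟨ε, hε, hball⟩ := Metric.eventually_nhds_iff.mp
    ((hK.tendsto (-|t₁|)).eventually (lt_mem_nhds (half_lt_self ha)))
  refine ⟨K (-|t₁|) / 2, half_pos ha, ε / 2, half_pos hε, -|t₁|, ?_, by simp,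
    fun t h₁ h₂ => (hball ?_).le⟩
  · by_contra! h
    exact ht₁ (hsupp t₁ (by linarith))
  · rw [Real.dist_eq, abs_lt]
    constructor <;> linarith

namespace FMRICore

variable {Ω : Type} [MeasurableSpace Ω] {μ : Measure Ω} (M : FMRICore Ω μ)

theorem integral_mul_eq_zero_of_lt {i j : ℕ} (hij : i + M.g < j) :
    ∫ ω, M.ε i ω * M.ε j ω ∂μ = 0 := by
  have hind := (M.hε_gdep i).comp (measurable_pi_apply (⟨i, i.lt_succ_self⟩ : Fin (i + 1)))
    (measurable_pi_apply (j - (i + M.g + 1)))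
  have hj : i + M.g + 1 + (j - (i + M.g + 1)) = j := by omega
  simp only [Function.comp_def, hj] at hind
  have := IndepFun.integral_mul_eq_mul_integral (X := M.ε i) (Y := M.ε j) hind
    (M.hε_meas i).aestronglyMeasurable (M.hε_meas j).aestronglyMeasurable
  simpa [M.hε_mean i] using this

theorem Rmat_isHermitian (n : ℕ) : (M.Rmat n).IsHermitian := by
  ext i j
  simp only [Rmat, Matrix.conjTranspose_apply, Matrix.of_apply, star_trivial, mul_comm]

theorem Rmat_isBanded (n : ℕ) : (M.Rmat n).IsBanded M.g := by
  intro i j h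
  simp only [Rmat, Matrix.of_apply, div_eq_zero_iff]
  left
  rcases lt_abs.mp h with h | h
  · have hij : ((i : ℕ) : ℝ) + M.g < (j : ℕ) := by linarith
    exact M.integral_mul_eq_zero_of_lt (by exact_mod_cast hij)
  · have hji : ((j : ℕ) : ℝ) + M.g < (i : ℕ) := by linarith
    simp_rw [mul_comm (M.ε (i : ℕ) _)]
    exact M.integral_mul_eq_zero_of_lt (by exact_mod_cast hji)

theorem isAVUS_inv_Rmat : IsAVUS fun n => (M.Rmat n)⁻¹ := by
  have hxx : ∀ {n : ℕ} (x : Fin n → ℝ), x ⬝ᵥ x = ∑ i, x i ^ 2 := fun x => by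
    simp [dotProduct, sq]
  refine IsAVUS.of_isSymm (fun n => (M.Rmat_isHermitian n).inv) fun n i =>
    Matrix.sum_abs_inv_apply_le (M.Rmat_isHermitian n) (M.Rmat_isBanded n) M.hra
      (fun x => hxx x ▸ (M.hR_eig n x).1) (fun x => hxx x ▸ (M.hR_eig n x).2) i

theorem isAVUS_Sd : IsAVUS M.Sd := by
  obtain ⟨CK, hK_lip⟩ := M.hK_lip
  obtain ⟨Kmax, hKm⟩ := M.hK_bdd
  obtain ⟨κ, hκ, η, hη, t₀, ht₀, ht₀', hwin⟩ := exists_window_lower_bound_of_integral_eq_one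
    hK_lip.continuous M.hK_symm M.hK_nonneg M.hK_supp M.hK_density
  refine IsAVUS.of_eventually (C := 9216 * M.L ^ 4 * Kmax ^ 2 / (κ * η ^ 2) ^ 2) ?_
  have hb : ∀ᶠ n in atTop, M.b n * (M.L + η) ≤ 1 / 4 := by
    have h : Tendsto (fun n => M.b n * (M.L + η)) atTop (nhds 0) := by
      simpa using M.hb_lim.mul_const (M.L + η)
    exact (h.eventually_lt_const (by norm_num)).mono fun _ => le_of_lt
  have hnbη : ∀ᶠ n in atTop, 8 ≤ n * M.b n * η :=
    (M.hnb_lim.atTop_mul_const hη).eventually_ge_atTop 8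
  have hLnb : ∀ᶠ n in atTop, 1 ≤ M.L * (n * M.b n) :=
    (M.hnb_lim.const_mul_atTop M.hL).eventually_ge_atTop 1
  filter_upwards [hb, hnbη, hLnb] with n hb hnbη hLnb
  exact linfty_opNorm_smoothMat_le M.hK_nonneg hKm M.hK_symm M.hK_supp hκ hη hwin ht₀ ht₀'
    (M.hb_pos n) hb hnbη hLnb

end FMRICore

theorem statement14 {Ω : Type} [MeasurableSpace Ω] {μ : Measure Ω} (M : FMRICore Ω μ) :
    ∃ C > (0 : ℝ), ∀ n : ℕ,
      (∀ j, ∑ i, |((M.Rmat n)⁻¹ * (1 - M.Sd n)) i j| ≤ C) ∧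
      (∀ i, ∑ j, |((M.Rmat n)⁻¹ * (1 - M.Sd n)) i j| ≤ C) ∧
      (∀ j, ∑ i, |(((1 - M.Sd n)ᵀ * (M.Rmat n)⁻¹ : Matrix (Fin n) (Fin n) ℝ)) i j| ≤ C) ∧
      (∀ i, ∑ j, |(((1 - M.Sd n)ᵀ * (M.Rmat n)⁻¹ : Matrix (Fin n) (Fin n) ℝ)) i j| ≤ C) ∧
      (∀ j, ∑ i, |(((1 - M.Sd n)ᵀ * (M.Rmat n)⁻¹ * (1 - M.Sd n) : Matrix (Fin n) (Fin n) ℝ)) i j| ≤ C) ∧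
      (∀ i, ∑ j, |(((1 - M.Sd n)ᵀ * (M.Rmat n)⁻¹ * (1 - M.Sd n) : Matrix (Fin n) (Fin n) ℝ)) i j| ≤ C) := by
  have hV := M.isAVUS_inv_Rmat
  have hT := IsAVUS.one.sub M.isAVUS_Sd
  obtain ⟨C₁, hR⟩ := hV.mul hT
  obtain ⟨C₂, hL⟩ := hT.transpose.mul hV
  obtain ⟨C₃, hLR⟩ := (hT.transpose.mul hV).mul hT
  set C := max 1 (max C₁ (max C₂ C₃))
  have hC : C₁ ≤ C ∧ C₂ ≤ C ∧ C₃ ≤ C := by simp [C]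
  refine ⟨C, by positivity, fun n => ?_⟩
  obtain ⟨hR₁, hR₂⟩ := Matrix.sum_abs_le_of_linfty_opNorm_le (hR n) hC.1
  obtain ⟨hL₁, hL₂⟩ := Matrix.sum_abs_le_of_linfty_opNorm_le (hL n) hC.2.1
  obtain ⟨hLR₁, hLR₂⟩ := Matrix.sum_abs_le_of_linfty_opNorm_le (hLR n) hC.2.2
  exact ⟨hR₁, hR₂, hL₁, hL₂, hLR₁, hLR₂⟩
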